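/- Let A = 1 − q·m, Δ₁ = A² − 4h, h₁ = m − (q+1)·m², and suppose A > 0 and Δ₁ > 0; let x₅ = (A + √Δ₁)/2. If m > A/2 and h > h₁, then x₅ < m; consequently the Jacobian matrix of F at E₅ = (x₅, m) has eigenvalues 1 − 2x₅ − q·m < 0 and s·m·(1 − m/x₅) < 0, i.e. two negative real eigenvalues. -/

import Mathlib

/-- The predator–prey vector field
    `F(x,y) = (x(1-x) - q x y - h, s y (1 - y/x)(y - m))`. -/
noncomputable def F (q s h m : ℝ) (p : ℝ × ℝ) : ℝ × ℝ :=
  (p.1 * (1 - p.1) - q * p.1 * p.2 - h, s * p.2 * (1 - p.2 / p.1) * (p.2 - m))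

/-- The continuous linear map `ℝ² → ℝ²` with matrix `[[a, b], [c, d]]`. -/
noncomputable def clm (a b c d : ℝ) : (ℝ × ℝ) →L[ℝ] (ℝ × ℝ) :=
  (a • ContinuousLinearMap.fst ℝ ℝ ℝ + b • ContinuousLinearMap.snd ℝ ℝ ℝ).prod
    (c • ContinuousLinearMap.fst ℝ ℝ ℝ + d • ContinuousLinearMap.snd ℝ ℝ ℝ)

/-!
`x₅` is the larger root of `x² - A x + h`. Since `h₁ = m (A - m)`, the hypothesis `h > h₁` says
that this quadratic is positive at `m`, and `m > A/2` puts `m` to the right of its vertex, so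
`m` exceeds both roots. On the line `y = m` the factor `y - m` kills the `∂/∂x` entry of the
second component, so the Jacobian at `E₅` is upper triangular; its diagonal entries are
`1 - 2x₅ - q m = -√Δ₁` and `s m (1 - m/x₅)`, both negative because `0 < x₅ < m`.
-/

theorem Matrix.spectrum_fin_two_upperTriangular {K : Type*} [Field K] (a b d : K) :
    spectrum K !![a, b; 0, d] = {a, d} := by
  ext μ
  rw [spectrum.mem_iff, Matrix.isUnit_iff_isUnit_det, isUnit_iff_ne_zero, not_not]
  simp [Matrix.det_fin_two, Matrix.algebraMap_eq_diagonal, sub_eq_zero, eq_comm]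

theorem larger_quadratic_root_lt {A h m : ℝ} (hvertex : A / 2 < m) (hpos : m * (A - m) < h) :
    (A + √(A ^ 2 - 4 * h)) / 2 < m := by
  have hsqrt : √(A ^ 2 - 4 * h) < 2 * m - A := by
    rw [Real.sqrt_lt' (by linarith)]
    linarith
  linarith

section Jacobian

open ContinuousLinearMap

variable (q s h m : ℝ)

theorem hasFDerivAt_F_fst (p : ℝ × ℝ) :
    HasFDerivAt (fun p => (F q s h m p).1)
      ((1 - 2 * p.1 - q * p.2) • fst ℝ ℝ ℝ + (-q * p.1) • snd ℝ ℝ ℝ) p := by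
  have hx : HasFDerivAt Prod.fst (fst ℝ ℝ ℝ) p := hasFDerivAt_fst
  have hy : HasFDerivAt Prod.snd (snd ℝ ℝ ℝ) p := hasFDerivAt_snd
  refine (((hx.mul ((hasFDerivAt_const 1 p).sub hx)).sub
    ((hx.const_mul q).mul hy)).sub (hasFDerivAt_const h p)).congr_fderiv ?_
  ext <;> simp; ring

theorem hasFDerivAt_F_snd {p : ℝ × ℝ} (hp : p.1 ≠ 0) :
    HasFDerivAt (fun p => (F q s h m p).2)
      ((s * p.2 ^ 2 * (p.2 - m) / p.1 ^ 2) • fst ℝ ℝ ℝ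
        + (s * ((1 - 2 * p.2 / p.1) * (p.2 - m) + p.2 * (1 - p.2 / p.1))) • snd ℝ ℝ ℝ) p := by
  have hy : HasFDerivAt Prod.snd (snd ℝ ℝ ℝ) p := hasFDerivAt_snd
  have hinv := (hasFDerivAt_inv hp).comp p hasFDerivAt_fst
  simp only [F, div_eq_mul_inv]
  refine (((hy.const_mul s).mul ((hasFDerivAt_const 1 p).sub (hy.mul hinv))).mul
    (hy.sub (hasFDerivAt_const m p))).congr_fderiv ?_
  ext <;> simp <;> field_simp; ring

theorem hasFDerivAt_F {x y : ℝ} (hx : x ≠ 0) :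
    HasFDerivAt (F q s h m)
      (clm (1 - 2 * x - q * y) (-q * x) (s * y ^ 2 * (y - m) / x ^ 2)
        (s * ((1 - 2 * y / x) * (y - m) + y * (1 - y / x)))) (x, y) :=
  (hasFDerivAt_F_fst q s h m (x, y)).prodMk (hasFDerivAt_F_snd q s h m (p := (x, y)) hx)

end Jacobian

theorem stmt10_general (q s h m x5 : ℝ) (hs : 0 < s)
    (hm0 : 0 < m)
    (hA : 0 < 1 - q*m) (hΔ : 0 < (1 - q*m)^2 - 4*h)
    (hx5 : x5 = (1 - q*m + Real.sqrt ((1 - q*m)^2 - 4*h))/2)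
    (hcond : (1 - q*m)/2 < m ∧ m - (q+1)*m^2 < h) :
    x5 < m ∧
    HasFDerivAt (F q s h m)
      (clm (1 - 2*x5 - q*m) (-q*x5) 0 (s*m*(1 - m/x5))) ((x5, m) : ℝ × ℝ) ∧
    (1 - 2*x5 - q*m) ∈ spectrum ℝ
      (!![1 - 2*x5 - q*m, -q*x5; 0, s*m*(1 - m/x5)] : Matrix (Fin 2) (Fin 2) ℝ) ∧
    (s*m*(1 - m/x5)) ∈ spectrum ℝ
      (!![1 - 2*x5 - q*m, -q*x5; 0, s*m*(1 - m/x5)] : Matrix (Fin 2) (Fin 2) ℝ) ∧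
    1 - 2*x5 - q*m < 0 ∧ s*m*(1 - m/x5) < 0 := by
  obtain ⟨hvertex, hh₁⟩ := hcond
  have hx5m : x5 < m := hx5 ▸ larger_quadratic_root_lt hvertex (by linarith)
  have hx5pos : 0 < x5 := by
    rw [hx5]
    linarith [Real.sqrt_nonneg ((1 - q*m)^2 - 4*h)]
  rw [Matrix.spectrum_fin_two_upperTriangular]
  refine ⟨hx5m, ?_, by simp, by simp, ?_, ?_⟩
  · convert hasFDerivAt_F q s h m (y := m) hx5pos.ne' using 2 <;> ring
  · rw [hx5]
    linarith [Real.sqrt_pos.2 hΔ]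
  · exact mul_neg_of_pos_of_neg (mul_pos hs hm0) (sub_neg.2 ((one_lt_div hx5pos).2 hx5m))

/-- With `A = 1 - q m > 0`, `Δ₁ = A² - 4h > 0`, `h₁ = m - (q+1)m²`, and
`x₅ = (A + √Δ₁)/2`: if `m > A/2` and `h > h₁` then `x₅ < m`; the Jacobian of `F` at
`E₅ = (x₅, m)` has the two negative eigenvalues `1 - 2x₅ - q m` and `s m (1 - m/x₅)`. -/
theorem stmt10 (q s h m x5 : ℝ) (hq : 0 < q) (hs : 0 < s) (hh : 0 < h)
    (hm0 : 0 < m) (hm1 : m < 1)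
    (hA : 0 < 1 - q*m) (hΔ : 0 < (1 - q*m)^2 - 4*h)
    (hx5 : x5 = (1 - q*m + Real.sqrt ((1 - q*m)^2 - 4*h))/2)
    (hcond : (1 - q*m)/2 < m ∧ m - (q+1)*m^2 < h) :
    x5 < m ∧
    HasFDerivAt (F q s h m)
      (clm (1 - 2*x5 - q*m) (-q*x5) 0 (s*m*(1 - m/x5))) ((x5, m) : ℝ × ℝ) ∧
    (1 - 2*x5 - q*m) ∈ spectrum ℝ
      (!![1 - 2*x5 - q*m, -q*x5; 0, s*m*(1 - m/x5)] : Matrix (Fin 2) (Fin 2) ℝ) ∧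
    (s*m*(1 - m/x5)) ∈ spectrum ℝ
      (!![1 - 2*x5 - q*m, -q*x5; 0, s*m*(1 - m/x5)] : Matrix (Fin 2) (Fin 2) ℝ) ∧
    1 - 2*x5 - q*m < 0 ∧ s*m*(1 - m/x5) < 0 :=
  stmt10_general q s h m x5 hs hm0 hA hΔ hx5 hcond
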